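/- arXiv:math/0402098 — 2 statements merged into one kernel-verified Lean document; each statement's English description precedes it below -/
import Mathlib

section
/- Let k be a field, let w : Γ → ℤ be a group homomorphism from a subgroup Γ of the multiplicative group of an algebraic closure of k, and let (V, f) and (W, g) be finite-dimensional k-vector spaces with endomorphisms that are pure of weights n and m respectively (i.e., all roots of the characteristic polynomial lie in Γ and have weight n, resp. m). Then the endomorphism f ⊗ g of V ⊗ W is pure of weight n + m. -/
open Polynomial

variable {k : Type*} [Field k]

/-- A polynomial `q ∈ k[t]` is pure of weight `n` (w.r.t. a weight function
`w : Γ →* ℤ`, `Γ ≤ k̄ˣ`) if every root of `q` in the algebraic closure `k̄` is a unit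
lying in `Γ` of weight `n`. -/
def PurePoly (Γ : Subgroup (AlgebraicClosure k)ˣ) (w : Γ →* Multiplicative ℤ)
    (q : k[X]) (n : ℤ) : Prop :=
  ∀ x : AlgebraicClosure k, Polynomial.aeval x q = 0 →
    ∃ u : (AlgebraicClosure k)ˣ, (u : AlgebraicClosure k) = x ∧
      ∃ hu : u ∈ Γ, w ⟨u, hu⟩ = Multiplicative.ofAdd n

/-- An endomorphism of a finite-dimensional vector space is pure of weight `n` if its
characteristic polynomial is. -/
def PureEndo (Γ : Subgroup (AlgebraicClosure k)ˣ) (w : Γ →* Multiplicative ℤ)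
    {V : Type*} [AddCommGroup V] [Module k V] [FiniteDimensional k V]
    (f : V →ₗ[k] V) (n : ℤ) : Prop :=
  PurePoly Γ w (LinearMap.charpoly f) n


/-- key aux: `∏_{b∈β} (s*t - a*b) = c*(s-a) + a^|β| * ∏_{b∈β}(t-b)` for some `c`. -/
lemma aux_prod {R : Type*} [CommRing R] (s t a : R) (β : Multiset R) :
    ∃ c : R, (β.map fun b => s * t - a * b).prod =
      c * (s - a) + a ^ Multiset.card β * (β.map fun b => t - b).prod := by
  induction β using Multiset.induction_on with
  | empty => exact ⟨0, by simp⟩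
  | cons b β ih =>
    obtain ⟨c, hc⟩ := ih
    refine ⟨t * (c * (s - a) + a ^ Multiset.card β * (β.map fun b => t - b).prod)
      + a * (t - b) * c, ?_⟩
    simp only [Multiset.map_cons, Multiset.prod_cons, Multiset.card_cons, hc, pow_succ]
    ring

lemma key_mem_span {R : Type*} [CommRing R] (s t : R) (α β : Multiset R) :
    (α.map fun a => (β.map fun b => s * t - a * b).prod).prod ∈
      Ideal.span {(α.map fun a => s - a).prod, (β.map fun b => t - b).prod} := by
  induction α using Multiset.induction_on with
  | empty => exact Ideal.mem_span_pair.mpr ⟨1, 0, by simp⟩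
  | cons a α ih =>
    obtain ⟨c, hc⟩ := aux_prod s t a β
    obtain ⟨u, v, huv⟩ := Ideal.mem_span_pair.mp ih
    refine Ideal.mem_span_pair.mpr ⟨c * u,
      (c * (s - a) + a ^ Multiset.card β * (β.map fun b => t - b).prod) * v
        + a ^ Multiset.card β * u * (α.map fun a => s - a).prod, ?_⟩
    simp only [Multiset.map_cons, Multiset.prod_cons, hc, ← huv]
    ring

/-- If `s` and `t` are commuting elements of a `K`-algebra annihilated by the split
polynomials with root multisets `α` and `β`, then `s*t` is annihilated by the polynomial
whose roots are the pairwise products. -/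
lemma key_aeval_eq_zero {K R : Type*} [Field K] [Ring R] [Algebra K R] (s t : R)
    (hst : Commute s t) (α β : Multiset K)
    (hs : aeval s (α.map fun a => X - C a).prod = 0)
    (ht : aeval t (β.map fun b => X - C b).prod = 0) :
    aeval (s * t) (α.map fun a => (β.map fun b => X - C (a * b)).prod).prod = 0 := by
  classical
  -- the commutative ring `K[X][Y]`
  set c : K →+* Polynomial (Polynomial K) := C.comp C with hc
  set x₁ : Polynomial (Polynomial K) := C X with hx₁
  set x₂ : Polynomial (Polynomial K) := X with hx₂
  -- evaluation `K[X][Y] → R`, `X ↦ s`, `Y ↦ t`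
  have h₁ : ∀ a : K, Commute (algebraMap K R a) s := fun a => Algebra.commute_algebraMap_left a s
  set φ₁ : K[X] →+* R := eval₂RingHom' (algebraMap K R) s h₁ with hφ₁
  have h₂ : ∀ p : K[X], Commute (φ₁ p) t := by
    intro p
    induction p using Polynomial.induction_on' with
    | add p q hp hq => simpa using hp.add_left hq
    | monomial n a =>
      have : φ₁ ((monomial n) a) = algebraMap K R a * s ^ n := by
        simp [hφ₁, eval₂RingHom', eval₂_monomial]
      rw [this]
      exact (Algebra.commute_algebraMap_left a t).mul_left (hst.pow_left n)
  set φ : Polynomial (Polynomial K) →+* R := eval₂RingHom' φ₁ t h₂ with hφ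
  have hφc : ∀ a : K, φ (c a) = algebraMap K R a := by
    intro a; simp [hφ, hc, eval₂RingHom', hφ₁]
  have hφx₁ : φ x₁ = s := by simp [hφ, hx₁, eval₂RingHom', hφ₁]
  have hφx₂ : φ x₂ = t := by simp [hφ, hx₂, eval₂RingHom']
  have hφcomp : ∀ (z : Polynomial (Polynomial K)) (p : K[X]),
      φ (eval₂ c z p) = eval₂ (algebraMap K R) (φ z) p := by
    intro z p
    rw [hom_eval₂]
    exact eval₂_congr (RingHom.ext fun a => hφc a) rfl rfl
  -- apply the span lemma in `K[X][Y]`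
  obtain ⟨u, v, huv⟩ := Ideal.mem_span_pair.mp (key_mem_span x₁ x₂ (α.map c) (β.map c))
  -- push `φ` through
  have hPa : φ (((α.map c).map fun a => x₁ - a).prod) = 0 := by
    have : (((α.map c).map fun a => x₁ - a).prod) = eval₂ c x₁ ((α.map fun a => X - C a).prod) := by
      rw [← coe_eval₂RingHom, map_multiset_prod, Multiset.map_map, Multiset.map_map]
      exact congrArg _ (Multiset.map_congr rfl fun a _ => by simp)
    rw [this, hφcomp _, hφx₁, ← aeval_def]
    exact hs
  have hQb : φ (((β.map c).map fun b => x₂ - b).prod) = 0 := by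
    have : (((β.map c).map fun b => x₂ - b).prod) = eval₂ c x₂ ((β.map fun b => X - C b).prod) := by
      rw [← coe_eval₂RingHom, map_multiset_prod, Multiset.map_map, Multiset.map_map]
      exact congrArg _ (Multiset.map_congr rfl fun b _ => by simp)
    rw [this, hφcomp _, hφx₂, ← aeval_def]
    exact ht
  have hnest : ((α.map c).map fun a => ((β.map c).map fun b => x₁ * x₂ - a * b).prod).prod
      = eval₂ c (x₁ * x₂) ((α.map fun a => (β.map fun b => X - C (a * b)).prod).prod) := by
    rw [← coe_eval₂RingHom, map_multiset_prod, Multiset.map_map, Multiset.map_map]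
    refine congrArg _ (Multiset.map_congr rfl fun a _ => ?_)
    simp only [Function.comp_apply, coe_eval₂RingHom]
    rw [← coe_eval₂RingHom, map_multiset_prod, Multiset.map_map, Multiset.map_map]
    exact congrArg _ (Multiset.map_congr rfl fun b _ => by simp)
  have := congrArg φ huv
  rw [map_add, map_mul, map_mul, hPa, hQb, hnest, hφcomp _, map_mul, hφx₁, hφx₂,
    ← aeval_def] at this
  simpa using this.symm

/-- A monic polynomial that splits is the product of its linear factors. -/
lemma monic_eq_prod_roots {K : Type*} [Field K] {p : K[X]} (hm : p.Monic)
    (hsplit : p.Splits) :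
    p = (p.roots.map fun a => X - C a).prod := by
  have hcard := (splits_iff_card_roots).mp hsplit
  conv_lhs => rw [← C_leadingCoeff_mul_prod_multiset_X_sub_C hcard]
  rw [hm.leadingCoeff, map_one, one_mul]

/-- Over a field, a root of the characteristic polynomial is an eigenvalue. -/
lemma exists_eigenvector_of_isRoot_charpoly {K M : Type*} [Field K] [AddCommGroup M]
    [Module K M] [FiniteDimensional K M] (Φ : M →ₗ[K] M) (x : K)
    (h : (LinearMap.charpoly Φ).eval x = 0) :
    ∃ v : M, v ≠ 0 ∧ Φ v = x • v := by
  classical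
  set b := Module.Free.chooseBasis K M
  set A := LinearMap.toMatrix b b Φ with hA
  have hchar : (Matrix.charpoly A).eval x = 0 := by
    rwa [LinearMap.charpoly_toMatrix] at *
  have hdet0 : (Matrix.scalar _ x - A).det = 0 := by
    have h2 := eval_det (Matrix.charmatrix A) x
    rw [Matrix.matPolyEquiv_charmatrix, eval_sub, eval_X, eval_C] at h2
    rw [← h2]
    exact hchar
  have hdet : LinearMap.det (Φ - x • 1) = 0 := by
    rw [← LinearMap.det_toMatrix b]
    have hmat : LinearMap.toMatrix b b (Φ - x • 1) = -(Matrix.scalar _ x - A) := by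
      rw [map_sub, map_smul, LinearMap.toMatrix_one, hA]
      rw [neg_sub]
      congr 1
      ext i j
      by_cases hij : i = j <;>
        simp [Matrix.scalar_apply, Matrix.smul_apply, Matrix.one_apply,
          Matrix.diagonal_apply, hij]
    rw [hmat, Matrix.det_neg, hdet0, mul_zero]
  have hker := LinearMap.bot_lt_ker_of_det_eq_zero hdet
  obtain ⟨v, hv, hv0⟩ := Submodule.ne_bot_iff _ |>.mp hker.ne'
  refine ⟨v, hv0, ?_⟩
  have := hv
  simp only [LinearMap.mem_ker, LinearMap.sub_apply, LinearMap.smul_apply,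
    Module.End.one_apply] at this
  exact sub_eq_zero.mp this

/-- `f ↦ f ⊗ id` as an algebra homomorphism on endomorphisms. -/
noncomputable def endRTensorAlgHom (k V W : Type*) [CommRing k] [AddCommGroup V] [Module k V]
    [AddCommGroup W] [Module k W] :
    Module.End k V →ₐ[k] Module.End k (TensorProduct k V W) :=
  AlgHom.ofLinearMap (LinearMap.rTensorHom W) (LinearMap.rTensor_id W V)
    (fun f g => LinearMap.rTensor_comp W f g)

/-- `g ↦ id ⊗ g` as an algebra homomorphism on endomorphisms. -/
noncomputable def endLTensorAlgHom (k V W : Type*) [CommRing k] [AddCommGroup V] [Module k V]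
    [AddCommGroup W] [Module k W] :
    Module.End k W →ₐ[k] Module.End k (TensorProduct k V W) :=
  AlgHom.ofLinearMap (LinearMap.lTensorHom V) (LinearMap.lTensor_id V W)
    (fun f g => LinearMap.lTensor_comp V f g)

section main
open TensorProduct

theorem pureEndo_tensor' {V W : Type*} [AddCommGroup V] [Module k V] [FiniteDimensional k V]
    [AddCommGroup W] [Module k W] [FiniteDimensional k W]
    (f : V →ₗ[k] V) (g : W →ₗ[k] W)
    (x : AlgebraicClosure k) (hx : aeval x (LinearMap.charpoly (TensorProduct.map f g)) = 0) :
    ∃ a b : AlgebraicClosure k, aeval a (LinearMap.charpoly f) = 0 ∧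
      aeval b (LinearMap.charpoly g) = 0 ∧ x = a * b := by
  classical
  set Θ := Module.End.baseChangeHom (R := k) (A := (AlgebraicClosure k)) (M := V ⊗[k] W) with hΘ
  set s : Module.End (AlgebraicClosure k) ((AlgebraicClosure k) ⊗[k] (V ⊗[k] W)) := Θ (endRTensorAlgHom k V W f) with hs_def
  set t : Module.End (AlgebraicClosure k) ((AlgebraicClosure k) ⊗[k] (V ⊗[k] W)) := Θ (endLTensorAlgHom k V W g) with ht_def
  have hmul : (endRTensorAlgHom k V W f) * (endLTensorAlgHom k V W g) = TensorProduct.map f g := by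
    show (LinearMap.rTensor W f) ∘ₗ (LinearMap.lTensor V g) = TensorProduct.map f g
    exact LinearMap.rTensor_comp_lTensor (f := f) (g := g)
  have hmul' : (endLTensorAlgHom k V W g) * (endRTensorAlgHom k V W f) = TensorProduct.map f g := by
    show (LinearMap.lTensor V g) ∘ₗ (LinearMap.rTensor W f) = TensorProduct.map f g
    exact LinearMap.lTensor_comp_rTensor (f := f) (g := g)
  have hst : s * t = Θ (TensorProduct.map f g) := by rw [hs_def, ht_def, ← map_mul, hmul]
  have hcomm : Commute s t := by
    show s * t = t * s
    rw [hs_def, ht_def, ← map_mul, ← map_mul, hmul, hmul']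
  -- the base-changed charpolys and their root multisets
  set pK : Polynomial (AlgebraicClosure k) := (LinearMap.charpoly f).map (algebraMap k (AlgebraicClosure k)) with hpK
  set qK : Polynomial (AlgebraicClosure k) := (LinearMap.charpoly g).map (algebraMap k (AlgebraicClosure k)) with hqK
  have hpKm : pK.Monic := (LinearMap.charpoly_monic f).map _
  have hqKm : qK.Monic := (LinearMap.charpoly_monic g).map _
  set α := pK.roots with hα
  set β := qK.roots with hβ
  have hpKprod : pK = (α.map fun a => X - C a).prod :=
    monic_eq_prod_roots hpKm (IsAlgClosed.splits pK)
  have hqKprod : qK = (β.map fun b => X - C b).prod :=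
    monic_eq_prod_roots hqKm (IsAlgClosed.splits qK)
  -- `s` is annihilated by `pK`
  have hsann : aeval s (α.map fun a => X - C a).prod = 0 := by
    rw [← hpKprod, hpK, aeval_map_algebraMap]
    rw [hs_def, ← AlgHom.comp_apply, aeval_algHom_apply, LinearMap.aeval_self_charpoly,
      map_zero]
  have htann : aeval t (β.map fun b => X - C b).prod = 0 := by
    rw [← hqKprod, hqK, aeval_map_algebraMap]
    rw [ht_def, ← AlgHom.comp_apply, aeval_algHom_apply, LinearMap.aeval_self_charpoly,
      map_zero]
  have hkey := key_aeval_eq_zero s t hcomm α β hsann htann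
  -- `x` is a root of the charpoly of the base change of `map f g`
  have hxroot : (LinearMap.charpoly ((TensorProduct.map f g).baseChange (AlgebraicClosure k))).eval x = 0 := by
    rw [LinearMap.charpoly_baseChange, eval_map, ← aeval_def]
    exact hx
  obtain ⟨v, hv0, hv⟩ := exists_eigenvector_of_isRoot_charpoly _ x hxroot
  -- the eigenvector kills the annihilating polynomial evaluated at `x`
  have hst' : s * t = (TensorProduct.map f g).baseChange (AlgebraicClosure k) := hst
  have heig : Module.End.HasEigenvector ((TensorProduct.map f g).baseChange (AlgebraicClosure k)) x v :=
    ⟨Module.End.mem_eigenspace_iff.mpr hv, hv0⟩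
  have happ := Module.End.aeval_apply_of_hasEigenvector
    (p := (α.map fun a => (β.map fun b => X - C (a * b)).prod).prod) heig
  rw [← hst', hkey] at happ
  have hev : ((α.map fun a => (β.map fun b => X - C (a * b)).prod).prod).eval x = 0 := by
    rcases smul_eq_zero.mp happ.symm with h | h
    · exact h
    · exact absurd h hv0
  -- extract a pair of roots
  rw [eval_multiset_prod, Multiset.map_map] at hev
  obtain ⟨a, ha, ha0⟩ := Multiset.mem_map.mp (Multiset.prod_eq_zero_iff.mp hev)
  rw [Function.comp_apply, eval_multiset_prod, Multiset.map_map] at ha0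
  obtain ⟨b, hb, hb0⟩ := Multiset.mem_map.mp (Multiset.prod_eq_zero_iff.mp ha0)
  rw [Function.comp_apply, eval_sub, eval_X, eval_C] at hb0
  refine ⟨a, b, ?_, ?_, sub_eq_zero.mp hb0⟩
  · have := isRoot_of_mem_roots (hα ▸ ha)
    rwa [IsRoot, hpK, eval_map, ← aeval_def] at this
  · have := isRoot_of_mem_roots (hβ ▸ hb)
    rwa [IsRoot, hqK, eval_map, ← aeval_def] at this

end main

/-- if `f` is pure of weight `n` on `V` and `g` is pure of weight `m` on
`W`, then `f ⊗ g` is pure of weight `n + m` on `V ⊗ W`. -/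
theorem pureEndo_tensor (Γ : Subgroup (AlgebraicClosure k)ˣ) (w : Γ →* Multiplicative ℤ)
    {V W : Type*} [AddCommGroup V] [Module k V] [FiniteDimensional k V]
    [AddCommGroup W] [Module k W] [FiniteDimensional k W]
    (f : V →ₗ[k] V) (g : W →ₗ[k] W) (n m : ℤ)
    (hf : PureEndo Γ w f n) (hg : PureEndo Γ w g m) :
    PureEndo Γ w (TensorProduct.map f g) (n + m) := by
  intro x hx
  obtain ⟨a, b, ha, hb, rfl⟩ := pureEndo_tensor' f g x hx
  obtain ⟨u, hux, hu, hwu⟩ := hf a ha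
  obtain ⟨u', hux', hu', hwu'⟩ := hg b hb
  refine ⟨u * u', by rw [Units.val_mul, hux, hux'], mul_mem hu hu', ?_⟩
  have : (⟨u * u', mul_mem hu hu'⟩ : Γ) = ⟨u, hu⟩ * ⟨u', hu'⟩ := rfl
  rw [this, map_mul, hwu, hwu', ← ofAdd_add]
end

section
/- In an additive category, let η : B → A and ζ : Y → X be chain maps of complexes, and suppose given chain maps λ : B → (Cζ)[-1] and μ : A → Y such that μ ∘ η = (-p_Y) ∘ λ, where p_Y : Cζ → Y[1] is the canonical projection. Then the map ν : Cη → X defined by ν(a, b) = λ_X(b) + ζ(μ(a)), where (λ_X, λ_Y) are the components of λ, is a chain map satisfying ν ∘ i_A = ζ ∘ μ, and the square relating ν with λ[1] via the canonical maps Cη → B[1] and X → Cζ commutes up to the homotopy h(a, b) = (0, μ(a)). -/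
noncomputable section

/-- Transport along an equality of indices. -/
def lcast (R : Type*) [Ring R] {M : ℤ → Type*} [∀ i, AddCommGroup (M i)]
    [∀ i, Module R (M i)] {i j : ℤ} (h : i = j) : M i ≃ₗ[R] M j := by
  subst h; exact LinearEquiv.refl R (M i)


section Helpers
variable {R : Type*} [Ring R] {M N : ℤ → Type*}
  [∀ i, AddCommGroup (M i)] [∀ i, Module R (M i)]
  [∀ i, AddCommGroup (N i)] [∀ i, Module R (N i)]

lemma lcast_rfl {i : ℤ} (h : i = i) (x : M i) : lcast R h x = x := rfl

lemma lcast_natural (f : ∀ i, M i →ₗ[R] N i) {i j : ℤ} (h : i = j) (x : M i) :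
    f j (lcast R h x) = lcast R h (f i x) := by subst h; rfl

lemma lcast_d (d : ∀ i, M i →ₗ[R] M (i - 1)) {i j : ℤ} (h : i = j)
    (x : M i) : d j (lcast R h x) = lcast R (show i - 1 = j - 1 by rw [h]) (d i x) := by
  subst h; rfl

lemma lcast_trans {i j k : ℤ} (h : i = j) (h' : j = k) (x : M i) :
    lcast R h' (lcast R (M := M) h x) = lcast R (h.trans h') x := by subst h; subst h'; rfl

lemma lcast_prod {i j : ℤ} (h : i = j) (h1 : i = j) (h2 : i - 1 = j - 1)
    (p : M i × N (i - 1)) :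
    lcast R (M := fun n => M n × N (n - 1)) h p = (lcast R h1 p.1, lcast R h2 p.2) := by
  subst h; rfl

end Helpers

variable (R : Type*) [Ring R]
variable (A B X Y : ℤ → Type*)
  [∀ i, AddCommGroup (A i)] [∀ i, Module R (A i)]
  [∀ i, AddCommGroup (B i)] [∀ i, Module R (B i)]
  [∀ i, AddCommGroup (X i)] [∀ i, Module R (X i)]
  [∀ i, AddCommGroup (Y i)] [∀ i, Module R (Y i)]
variable (dA : ∀ i : ℤ, A i →ₗ[R] A (i - 1)) (dB : ∀ i : ℤ, B i →ₗ[R] B (i - 1))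
variable (dX : ∀ i : ℤ, X i →ₗ[R] X (i - 1)) (dY : ∀ i : ℤ, Y i →ₗ[R] Y (i - 1))
variable (eta : ∀ i : ℤ, B i →ₗ[R] A i) (zeta : ∀ i : ℤ, Y i →ₗ[R] X i)

/-- The mapping cone `Cη` of `η : B → A`: `(Cη)_i = A_i ⊕ B_{i-1}`. -/
abbrev coneEta (i : ℤ) := A i × B (i - 1)

/-- The differential of `Cη`: `d(a,b) = (dA a + η b, -dB b)`. -/
def dConeEta (i : ℤ) : coneEta A B i →ₗ[R] coneEta A B (i - 1) :=
  LinearMap.prod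
    (LinearMap.coprod (dA i) (eta (i - 1)))
    ((-(dB (i - 1))).comp (LinearMap.snd R (A i) (B (i - 1))))

/-- The mapping cone `Cζ` of `ζ : Y → X`. -/
abbrev coneZeta (i : ℤ) := X i × Y (i - 1)

/-- The differential of `Cζ`. -/
def dConeZeta (i : ℤ) : coneZeta X Y i →ₗ[R] coneZeta X Y (i - 1) :=
  LinearMap.prod
    (LinearMap.coprod (dX i) (zeta (i - 1)))
    ((-(dY (i - 1))).comp (LinearMap.snd R (X i) (Y (i - 1))))

/-- The shifted cone `(Cζ)[-1]`: `((Cζ)[-1])_i = X_{i+1} ⊕ Y_i`. -/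
abbrev sConeZeta (i : ℤ) := X (i + 1) × Y i

/-- The differential of `(Cζ)[-1]`, which is `-d_{Cζ}`. -/
def dSConeZeta (i : ℤ) : sConeZeta X Y i →ₗ[R] sConeZeta X Y (i - 1) :=
  LinearMap.prod
    (LinearMap.coprod
      (-((lcast R (show i + 1 - 1 = i - 1 + 1 by ring)).toLinearMap.comp (dX (i + 1))))
      (-((lcast R (show i = i - 1 + 1 by ring)).toLinearMap.comp (zeta i))))
    ((dY i).comp (LinearMap.snd R (X (i + 1)) (Y i)))

variable (lam : ∀ i : ℤ, B i →ₗ[R] sConeZeta X Y i) (mu : ∀ i : ℤ, A i →ₗ[R] Y i)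

/-- `ν : Cη → X`, `ν(a,b) = λ_X(b) + ζ(μ(a))`. -/
def nuMap (i : ℤ) : coneEta A B i →ₗ[R] X i :=
  LinearMap.coprod
    ((zeta i).comp (mu i))
    ((lcast R (show i - 1 + 1 = i by ring)).toLinearMap.comp
      ((LinearMap.fst R (X (i - 1 + 1)) (Y (i - 1))).comp (lam (i - 1))))

/-- The homotopy `h : Cη → Cζ[1]`, `h(a,b) = (0, μ(a))`, in degree `i` a map
`(Cη)_i → (Cζ)_{i+1} = X_{i+1} ⊕ Y_i`. -/
def homot (i : ℤ) : coneEta A B i →ₗ[R] coneZeta X Y (i + 1) :=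
  LinearMap.prod 0
    (((lcast R (show i = i + 1 - 1 by ring)).toLinearMap.comp (mu i)).comp
      (LinearMap.fst R (A i) (B (i - 1))))

lemma lcast_coneZeta {i j : ℤ} (h : i = j) (p : coneZeta X Y i) :
    lcast R (M := fun n => coneZeta X Y n) h p
      = (lcast R h p.1, lcast R (show i - 1 = j - 1 by rw [h]) p.2) := by subst h; rfl

/-- given chain maps `η : B → A`, `ζ : Y → X`, `λ : B → (Cζ)[-1]`,
`μ : A → Y` with `μ ∘ η = (-p_Y) ∘ λ`, the map `ν : Cη → X`, `ν(a,b) = λ_X(b) + ζμ(a)`,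
is a chain map with `ν ∘ i_A = ζ ∘ μ`, and the square relating `ν` and `λ[1]` (via
`Cη → B[1]` and `X → Cζ`) commutes up to the homotopy `h(a,b) = (0, μ(a))`. -/
theorem cone_lemma
    (hdA : ∀ i, (dA (i - 1)).comp (dA i) = 0) (hdB : ∀ i, (dB (i - 1)).comp (dB i) = 0)
    (hdX : ∀ i, (dX (i - 1)).comp (dX i) = 0) (hdY : ∀ i, (dY (i - 1)).comp (dY i) = 0)
    (heta : ∀ i, (dA i).comp (eta i) = (eta (i - 1)).comp (dB i))
    (hzeta : ∀ i, (dX i).comp (zeta i) = (zeta (i - 1)).comp (dY i))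
    (hlam : ∀ i, (dSConeZeta R X Y dX dY zeta i).comp (lam i) = (lam (i - 1)).comp (dB i))
    (hmu : ∀ i, (dY i).comp (mu i) = (mu (i - 1)).comp (dA i))
    (hsquare : ∀ i (b : B i), mu i (eta i b) = -((lam i b).2)) :
    -- ν is a chain map
    (∀ i, (dX i).comp (nuMap R A B X Y zeta lam mu i)
        = (nuMap R A B X Y zeta lam mu (i - 1)).comp (dConeEta R A B dA dB eta i)) ∧
    -- ν ∘ i_A = ζ ∘ μ
    (∀ i (a : A i), nuMap R A B X Y zeta lam mu i (a, 0) = zeta i (mu i a)) ∧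
    -- the right-hand square commutes up to the homotopy h
    (∀ i (x : coneEta A B i),
      -- (i_X ∘ ν)(x) - (λ[1] ∘ p_B)(x) = d_{Cζ} (h x) + h (d_{Cη} x)
      ((nuMap R A B X Y zeta lam mu i x, 0) : coneZeta X Y i)
          - (((lcast R (show i - 1 + 1 = i by ring) :
                X (i - 1 + 1) ≃ₗ[R] X i) ((lam (i - 1) x.2).1), (lam (i - 1) x.2).2)
              : coneZeta X Y i)
        = (lcast R (show i + 1 - 1 = i by ring) :
              (fun j => coneZeta X Y j) (i + 1 - 1) ≃ₗ[R] coneZeta X Y i)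
            (dConeZeta R X Y dX dY zeta (i + 1) (homot R A B X Y mu i x))
          + (lcast R (show i - 1 + 1 = i by ring) :
                (fun j => coneZeta X Y j) (i - 1 + 1) ≃ₗ[R] coneZeta X Y i)
              (homot R A B X Y mu (i - 1) (dConeEta R A B dA dB eta i x))) := by
  refine ⟨?_, ?_, ?_⟩
  · intro i
    apply LinearMap.ext
    rintro ⟨a, b⟩
    have hmu' := LinearMap.congr_fun (hmu i) a
    have hz1 := LinearMap.congr_fun (hzeta i) (mu i a)
    simp only [LinearMap.comp_apply] at hmu' hz1
    have hsq := hsquare (i - 1) b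
    have hl := congrArg Prod.fst (LinearMap.congr_fun (hlam (i - 1)) b)
    simp only [dSConeZeta, LinearMap.comp_apply, LinearMap.prod_apply, Function.prod,
      LinearMap.coprod_apply, LinearMap.neg_apply, LinearEquiv.coe_coe] at hl
    simp only [nuMap, dConeEta, LinearMap.comp_apply, LinearMap.prod_apply, Function.prod,
      LinearMap.coprod_apply, LinearMap.neg_apply, LinearEquiv.coe_coe, map_add, map_neg,
      LinearMap.fst_apply, LinearMap.snd_apply]
    rw [hz1, hmu', lcast_d dX, ← hl]
    simp only [map_add, map_neg, neg_add, neg_neg, lcast_trans, lcast_rfl, hsq, map_neg]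
    abel
  · intro i a
    simp [nuMap]
  · intro i x
    obtain ⟨a, b⟩ := x
    have hmu' := LinearMap.congr_fun (hmu i) a
    simp only [LinearMap.comp_apply] at hmu'
    have hsq := hsquare (i - 1) b
    simp only [nuMap, dConeEta, dConeZeta, homot, LinearMap.comp_apply, LinearMap.prod_apply,
      Function.prod, LinearMap.coprod_apply, LinearMap.neg_apply, LinearEquiv.coe_coe, map_add,
      map_neg, map_zero, LinearMap.fst_apply, LinearMap.snd_apply, LinearMap.zero_apply,
      zero_add, Prod.mk_sub_mk, Prod.mk_add_mk,
      lcast_coneZeta R X Y]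
    simp only [lcast_natural zeta, lcast_natural mu, lcast_d dY, lcast_trans, lcast_rfl,
      map_add, map_neg, hmu', hsq]
    rw [Prod.mk.injEq]
    exact ⟨by abel, by abel⟩

end
end
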